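/- arXiv:1506.06902 — 5 statements merged into one kernel-verified Lean document; each statement's English description precedes it below -/
import Mathlib

section
/- Let q, α be nonzero complex numbers with the q-Racah eigenvalues θ_p = (α q^{2p} + α^{-1} q^{-2p})/2. Let I be a finite index set, d : I → ℤ a function, D the diagonal matrix over I with D_{ii} = θ_{d(i)}, and M any I × I matrix satisfying M_{ij} = 0 whenever |d(i) - d(j)| > 1. Then [D, [D, [D, M]_q]_{q^{-1}}] = -((q^2 - q^{-2})^2/4) [D, M], where [X,Y]_q = qXY - q^{-1}YX and [X,Y] = XY - YX. -/
lemma key_abstract (q a b m : ℂ)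
    (h : (q⁻¹ * a - q * b) * (q * a - q⁻¹ * b) = -((q ^ 2 - q⁻¹ ^ 2) ^ 2 / 4)) :
    a * (q⁻¹ * (a * (q * (a * m) - q⁻¹ * (m * b))) - q * ((q * (a * m) - q⁻¹ * (m * b)) * b))
      - (q⁻¹ * (a * (q * (a * m) - q⁻¹ * (m * b))) - q * ((q * (a * m) - q⁻¹ * (m * b)) * b)) * b
      = -((q ^ 2 - q⁻¹ ^ 2) ^ 2 / 4) * (a * m - m * b) := by
  linear_combination (a - b) * m * h

lemma hyp1 (q α : ℂ) (hq : q ≠ 0) (hα : α ≠ 0) :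
    (q⁻¹ * ((α * (q * q) + α⁻¹ * (q * q)⁻¹) / 2) - q * ((α * 1 + α⁻¹ * 1) / 2))
      * (q * ((α * (q * q) + α⁻¹ * (q * q)⁻¹) / 2) - q⁻¹ * ((α * 1 + α⁻¹ * 1) / 2))
      = -((q ^ 2 - q⁻¹ ^ 2) ^ 2 / 4) := by
  have h1 : α * α⁻¹ = 1 := mul_inv_cancel₀ hα
  have h2 : q * q⁻¹ = 1 := mul_inv_cancel₀ hq
  linear_combination (-q⁻¹^4/4 + q*q⁻¹/2 - q^2*q⁻¹^2/2 + q^3*q⁻¹^3/2 - q^4/4) * h1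
    + (-q*q⁻¹/2 + q^2*q⁻¹^2/2 + α⁻¹^2*q⁻¹^4/4 - α⁻¹^2*q*q⁻¹/4 - α^2*q*q⁻¹/4 + α^2*q^4/4) * h2

lemma hyp2 (q α : ℂ) (hq : q ≠ 0) (hα : α ≠ 0) :
    (q⁻¹ * ((α * (q * q)⁻¹ + α⁻¹ * (q * q)) / 2) - q * ((α * 1 + α⁻¹ * 1) / 2))
      * (q * ((α * (q * q)⁻¹ + α⁻¹ * (q * q)) / 2) - q⁻¹ * ((α * 1 + α⁻¹ * 1) / 2))
      = -((q ^ 2 - q⁻¹ ^ 2) ^ 2 / 4) := by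
  have h1 : α * α⁻¹ = 1 := mul_inv_cancel₀ hα
  have h2 : q * q⁻¹ = 1 := mul_inv_cancel₀ hq
  linear_combination (-q⁻¹^4/4 + q*q⁻¹/2 - q^2*q⁻¹^2/2 + q^3*q⁻¹^3/2 - q^4/4) * h1
    + (-q*q⁻¹/2 + q^2*q⁻¹^2/2 - α⁻¹^2*q*q⁻¹/4 + α⁻¹^2*q^4/4 + α^2*q⁻¹^4/4 - α^2*q*q⁻¹/4) * h2

lemma scalar_key (q α : ℂ) (hq : q ≠ 0) (hα : α ≠ 0) (p : ℤ) (m : ℂ)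
    (h : p = 1 ∨ p = -1) :
    let θ : ℤ → ℂ := fun p => (α * q ^ (2 * p) + α⁻¹ * q ^ (-(2 * p))) / 2
    let a := θ p; let b := θ 0
    a * (q⁻¹ * (a * (q * (a * m) - q⁻¹ * (m * b))) - q * ((q * (a * m) - q⁻¹ * (m * b)) * b))
      - (q⁻¹ * (a * (q * (a * m) - q⁻¹ * (m * b))) - q * ((q * (a * m) - q⁻¹ * (m * b)) * b)) * b
      = -((q ^ 2 - q⁻¹ ^ 2) ^ 2 / 4) * (a * m - m * b) := by
  intro θ a b
  have h2 : (q:ℂ) ^ (2:ℤ) = q * q := zpow_two q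
  have hm2 : (q:ℂ) ^ (-2:ℤ) = (q * q)⁻¹ := by rw [zpow_neg, h2]
  rcases h with h | h <;> subst h <;>
    simp only [a, b, θ, show (2:ℤ)*1 = 2 from rfl, show (2:ℤ)*(-1) = -2 from rfl,
      show -((2:ℤ)) = -2 from rfl, show -((-2):ℤ) = 2 from rfl,
      h2, hm2, mul_zero, zpow_zero]
  · exact key_abstract q _ _ m (hyp1 q α hq hα)
  · exact key_abstract q _ _ m (hyp2 q α hq hα)

theorem stmt_2 {I : Type*} [Fintype I] [DecidableEq I]
    (q α : ℂ) (hq : q ≠ 0) (hα : α ≠ 0)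
    (d : I → ℤ) (M : Matrix I I ℂ)
    (hM : ∀ i j, 1 < |d i - d j| → M i j = 0) :
    let θ : ℤ → ℂ := fun p => (α * q ^ (2 * p) + α⁻¹ * q ^ (-(2 * p))) / 2
    let D : Matrix I I ℂ := Matrix.diagonal fun i => θ (d i)
    let qc : Matrix I I ℂ → Matrix I I ℂ → Matrix I I ℂ :=
      fun X Y => q • (X * Y) - q⁻¹ • (Y * X)
    let qci : Matrix I I ℂ → Matrix I I ℂ → Matrix I I ℂ :=
      fun X Y => q⁻¹ • (X * Y) - q • (Y * X)
    D * qci D (qc D M) - qci D (qc D M) * D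
      = -((q^2 - q⁻¹^2)^2 / 4) • (D * M - M * D) := by
  intro θ D qc qci
  ext i j
  simp only [D, qc, qci, Matrix.sub_apply, Matrix.smul_apply, Matrix.mul_sub, Matrix.sub_mul,
    Matrix.mul_smul, Matrix.smul_mul, Matrix.diagonal_mul, Matrix.mul_diagonal,
    Matrix.smul_apply, smul_eq_mul]
  set a := θ (d i) with ha
  set b := θ (d j) with hb
  by_cases hij : 1 < |d i - d j|
  · rw [hM i j hij]; ring
  · rw [not_lt] at hij
    have habs := abs_le.mp hij
    rcases (by omega : d i = d j ∨ d i - d j = 1 ∨ d i - d j = -1) with h | h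
    · have : a = b := by rw [ha, h]
      rw [this]; ring
    · have hα' : α * q ^ (2 * d j) ≠ 0 := mul_ne_zero hα (zpow_ne_zero _ hq)
      have key := scalar_key q (α * q ^ (2 * d j)) hq hα' (d i - d j) (M i j) h
      simp only at key
      have e1 : α * q ^ (2 * d j) * q ^ (2 * (d i - d j)) = α * q ^ (2 * d i) := by
        rw [mul_assoc, ← zpow_add₀ hq]; congr 2; omega
      have e2 : (α * q ^ (2 * d j))⁻¹ * q ^ (-(2 * (d i - d j))) = α⁻¹ * q ^ (-(2 * d i)) := by
        rw [mul_inv, ← zpow_neg, mul_assoc, ← zpow_add₀ hq]; congr 2; omega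
      have ea : a = (α * q ^ (2 * d j) * q ^ (2 * (d i - d j))
          + (α * q ^ (2 * d j))⁻¹ * q ^ (-(2 * (d i - d j)))) / 2 := by
        rw [e1, e2, ha]
      have eb : b = (α * q ^ (2 * d j) * q ^ (2 * (0:ℤ))
          + (α * q ^ (2 * d j))⁻¹ * q ^ (-(2 * (0:ℤ)))) / 2 := by
        rw [hb]
        simp [mul_inv, ← zpow_neg, mul_assoc, ← zpow_add₀ hq]
        ring
      rw [ea, eb]
      convert key using 2 <;> ring
end

section
/- Let q be a nonzero complex number, let V be the space of functions f : ℂ* → ℂ, let A : V → V be multiplication by x(z) = (z + z^{-1})/2, let E : V → V be the shift (Ef)(z) = f(q^2 z) with inverse E^{-1}, and let B = M_{g_+} ∘ E + M_{g_-} ∘ E^{-1} + M_{g_0}, where M_g denotes multiplication by an arbitrary function g : ℂ* → ℂ. Then [A, [A, [A, B]_q]_{q^{-1}}] + ((q^2 - q^{-2})^2/4) [A, B] = 0 as operators on V. -/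
set_option maxHeartbeats 2000000 in
theorem stmt_3 (q : ℂˣ) (gp gm g0 : ℂˣ → ℂ) :
    let V := ℂˣ → ℂ
    let x : ℂˣ → ℂ := fun z => ((z : ℂ) + (z : ℂ)⁻¹) / 2
    let A : V → V := fun f z => x z * f z
    let E : V → V := fun f z => f (q ^ 2 * z)
    let Einv : V → V := fun f z => f ((q ^ 2)⁻¹ * z)
    let B : V → V := fun f z => gp z * E f z + gm z * Einv f z + g0 z * f z
    let c : (V → V) → (V → V) → (V → V) := fun X Y => X ∘ Y - Y ∘ X
    let qc : (V → V) → (V → V) → (V → V) :=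
      fun X Y => (q : ℂ) • (X ∘ Y) - (q : ℂ)⁻¹ • (Y ∘ X)
    let qci : (V → V) → (V → V) → (V → V) :=
      fun X Y => (q : ℂ)⁻¹ • (X ∘ Y) - (q : ℂ) • (Y ∘ X)
    c A (qci A (qc A B)) + (((q : ℂ)^2 - (q : ℂ)⁻¹^2)^2 / 4) • c A B = 0 := by
  intro V x A E Einv B c qc qci
  funext f z
  have h0 : (0 : (V → V)) f z = (0 : ℂ) := rfl
  rw [h0]
  have hq : (q : ℂ) ≠ 0 := q.ne_zero
  have hz : (z : ℂ) ≠ 0 := z.ne_zero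
  have h1 : (z : ℂ) * (z : ℂ)⁻¹ = 1 := mul_inv_cancel₀ hz
  have h2 : (q : ℂ) * (q : ℂ)⁻¹ = 1 := mul_inv_cancel₀ hq
  simp only [V, c, qc, qci, A, B, E, Einv, x, Pi.add_apply, Pi.sub_apply, Pi.smul_apply,
    Function.comp_apply, Pi.zero_apply, smul_eq_mul, Units.val_mul, Units.val_pow_eq_pow_val,
    Units.val_inv_eq_inv_val, mul_inv, inv_inv, ← inv_pow]
  linear_combination
      (gp z * f (q ^ 2 * z) * ((-1/4 : ℂ)*(z : ℂ)⁻¹*(q : ℂ)⁻¹^4 + (1/8 : ℂ)*(z : ℂ)⁻¹*(q : ℂ)⁻¹^6 + (3/8 : ℂ)*(z : ℂ)⁻¹*(q : ℂ)*(q : ℂ)⁻¹ + (-1/4 : ℂ)*(z : ℂ)⁻¹*(q : ℂ)*(q : ℂ)⁻¹^3 + (1/8 : ℂ)*(z : ℂ)⁻¹*(q : ℂ)*(q : ℂ)⁻¹^5 + (-3/8 : ℂ)*(z : ℂ)⁻¹*(q : ℂ)^2*(q : ℂ)⁻¹^2 + (3/8 : ℂ)*(z : ℂ)⁻¹*(q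 : ℂ)^2*(q : ℂ)⁻¹^4 + (-1/8 : ℂ)*(z : ℂ)⁻¹*(q : ℂ)^3*(q : ℂ)⁻¹ + (1/4 : ℂ)*(z : ℂ)⁻¹*(q : ℂ)^3*(q : ℂ)⁻¹^3 + (-3/8 : ℂ)*(z : ℂ)⁻¹*(q : ℂ)^3*(q : ℂ)⁻¹^5 + (-1/8 : ℂ)*(z : ℂ)⁻¹*(q : ℂ)^4 + (1/4 : ℂ)*(z : ℂ)⁻¹*(q : ℂ)^4*(q : ℂ)⁻¹^2 + (-1/8 : ℂ)*(z : ℂ)*(q : ℂ)⁻¹^4 + (3/8 : ℂ)*(z : ℂ)*(q : ℂ)*(q : ℂ)⁻¹ + (-1/8 : ℂ)*(z : ℂ)*(q : ℂ)*(q : ℂ)⁻¹^3 + (-3/8 : ℂ)*(z : ℂ)*(q : ℂ)^2*(q : ℂ)⁻¹^2 + (1/4 : ℂ)*(z : ℂ)*(q : ℂ)^2*(q : ℂ)⁻¹^4 + (-1/4 : ℂ)*(z : ℂ)*(q : ℂ)^3*(q : ℂ)⁻¹ + (1/4 : ℂ)*(z : ℂ)*(q : ℂ)^3*(q : ℂ)⁻¹^3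 + (-1/4 : ℂ)*(z : ℂ)*(q : ℂ)^4 + (3/8 : ℂ)*(z : ℂ)*(q : ℂ)^4*(q : ℂ)⁻¹^2 + (1/8 : ℂ)*(z : ℂ)*(q : ℂ)^5*(q : ℂ)⁻¹ + (-3/8 : ℂ)*(z : ℂ)*(q : ℂ)^5*(q : ℂ)⁻¹^3 + (1/8 : ℂ)*(z : ℂ)*(q : ℂ)^6) +
        gm z * f ((q ^ 2)⁻¹ * z) * ((-1/8 : ℂ)*(z : ℂ)⁻¹*(q : ℂ)⁻¹^4 + (3/8 : ℂ)*(z : ℂ)⁻¹*(q : ℂ)*(q : ℂ)⁻¹ + (-1/8 : ℂ)*(z : ℂ)⁻¹*(q : ℂ)*(q : ℂ)⁻¹^3 + (-3/8 : ℂ)*(z : ℂ)⁻¹*(q : ℂ)^2*(q : ℂ)⁻¹^2 + (1/4 : ℂ)*(z : ℂ)⁻¹*(q : ℂ)^2*(q : ℂ)⁻¹^4 + (-1/4 : ℂ)*(z : ℂ)⁻¹*(q : ℂ)^3*(q : ℂ)⁻¹ + (1/4 : ℂ)*(z : ℂ)⁻¹*(q : ℂ)^3*(q : ℂ)⁻¹^3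 + (-1/4 : ℂ)*(z : ℂ)⁻¹*(q : ℂ)^4 + (3/8 : ℂ)*(z : ℂ)⁻¹*(q : ℂ)^4*(q : ℂ)⁻¹^2 + (1/8 : ℂ)*(z : ℂ)⁻¹*(q : ℂ)^5*(q : ℂ)⁻¹ + (-3/8 : ℂ)*(z : ℂ)⁻¹*(q : ℂ)^5*(q : ℂ)⁻¹^3 + (1/8 : ℂ)*(z : ℂ)⁻¹*(q : ℂ)^6 + (-1/4 : ℂ)*(z : ℂ)*(q : ℂ)⁻¹^4 + (1/8 : ℂ)*(z : ℂ)*(q : ℂ)⁻¹^6 + (3/8 : ℂ)*(z : ℂ)*(q : ℂ)*(q : ℂ)⁻¹ + (-1/4 : ℂ)*(z : ℂ)*(q : ℂ)*(q : ℂ)⁻¹^3 + (1/8 : ℂ)*(z : ℂ)*(q : ℂ)*(q : ℂ)⁻¹^5 + (-3/8 : ℂ)*(z : ℂ)*(q : ℂ)^2*(q : ℂ)⁻¹^2 + (3/8 : ℂ)*(z : ℂ)*(q : ℂ)^2*(q : ℂ)⁻¹^4 + (-1/8 : ℂ)*(z : ℂ)*(q : ℂ)^3*(q : ℂ)⁻¹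 + (1/4 : ℂ)*(z : ℂ)*(q : ℂ)^3*(q : ℂ)⁻¹^3 + (-3/8 : ℂ)*(z : ℂ)*(q : ℂ)^3*(q : ℂ)⁻¹^5 + (-1/8 : ℂ)*(z : ℂ)*(q : ℂ)^4 + (1/4 : ℂ)*(z : ℂ)*(q : ℂ)^4*(q : ℂ)⁻¹^2)) * h1 +
      (gp z * f (q ^ 2 * z) * ((1/8 : ℂ)*(z : ℂ)⁻¹*(q : ℂ)⁻¹^4 + (-3/8 : ℂ)*(z : ℂ)⁻¹*(q : ℂ)*(q : ℂ)⁻¹ + (1/4 : ℂ)*(z : ℂ)⁻¹*(q : ℂ)*(q : ℂ)⁻¹^3 + (1/4 : ℂ)*(z : ℂ)⁻¹*(q : ℂ)^2*(q : ℂ)⁻¹^2 + (-3/8 : ℂ)*(z : ℂ)⁻¹*(q : ℂ)^2*(q : ℂ)⁻¹^4 + (1/8 : ℂ)*(z : ℂ)⁻¹*(q : ℂ)^3*(q : ℂ)⁻¹ + (1/8 : ℂ)*(z : ℂ)⁻¹^3*(q : ℂ)⁻¹^4 + (-1/8 : ℂ)*(z : ℂ)⁻¹^3*(q : ℂ)⁻¹^6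 + (-1/8 : ℂ)*(z : ℂ)⁻¹^3*(q : ℂ)*(q : ℂ)⁻¹ + (1/8 : ℂ)*(z : ℂ)⁻¹^3*(q : ℂ)*(q : ℂ)⁻¹^3 + (-3/8 : ℂ)*(z : ℂ)*(q : ℂ)*(q : ℂ)⁻¹ + (1/8 : ℂ)*(z : ℂ)*(q : ℂ)*(q : ℂ)⁻¹^3 + (1/4 : ℂ)*(z : ℂ)*(q : ℂ)^2*(q : ℂ)⁻¹^2 + (1/4 : ℂ)*(z : ℂ)*(q : ℂ)^3*(q : ℂ)⁻¹ + (1/8 : ℂ)*(z : ℂ)*(q : ℂ)^4 + (-3/8 : ℂ)*(z : ℂ)*(q : ℂ)^4*(q : ℂ)⁻¹^2 + (-1/8 : ℂ)*(z : ℂ)^3*(q : ℂ)*(q : ℂ)⁻¹ + (1/8 : ℂ)*(z : ℂ)^3*(q : ℂ)^3*(q : ℂ)⁻¹ + (1/8 : ℂ)*(z : ℂ)^3*(q : ℂ)^4 + (-1/8 : ℂ)*(z : ℂ)^3*(q : ℂ)^6) +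
        gm z * f ((q ^ 2)⁻¹ * z) * ((-3/8 : ℂ)*(z : ℂ)⁻¹*(q : ℂ)*(q : ℂ)⁻¹ + (1/8 : ℂ)*(z : ℂ)⁻¹*(q : ℂ)*(q : ℂ)⁻¹^3 + (1/4 : ℂ)*(z : ℂ)⁻¹*(q : ℂ)^2*(q : ℂ)⁻¹^2 + (1/4 : ℂ)*(z : ℂ)⁻¹*(q : ℂ)^3*(q : ℂ)⁻¹ + (1/8 : ℂ)*(z : ℂ)⁻¹*(q : ℂ)^4 + (-3/8 : ℂ)*(z : ℂ)⁻¹*(q : ℂ)^4*(q : ℂ)⁻¹^2 + (-1/8 : ℂ)*(z : ℂ)⁻¹^3*(q : ℂ)*(q : ℂ)⁻¹ + (1/8 : ℂ)*(z : ℂ)⁻¹^3*(q : ℂ)^3*(q : ℂ)⁻¹ + (1/8 : ℂ)*(z : ℂ)⁻¹^3*(q : ℂ)^4 + (-1/8 : ℂ)*(z : ℂ)⁻¹^3*(q : ℂ)^6 + (1/8 : ℂ)*(z : ℂ)*(q : ℂ)⁻¹^4 + (-3/8 : ℂ)*(z : ℂ)*(q : ℂ)*(q : ℂ)⁻¹ +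 (1/4 : ℂ)*(z : ℂ)*(q : ℂ)*(q : ℂ)⁻¹^3 + (1/4 : ℂ)*(z : ℂ)*(q : ℂ)^2*(q : ℂ)⁻¹^2 + (-3/8 : ℂ)*(z : ℂ)*(q : ℂ)^2*(q : ℂ)⁻¹^4 + (1/8 : ℂ)*(z : ℂ)*(q : ℂ)^3*(q : ℂ)⁻¹ + (1/8 : ℂ)*(z : ℂ)^3*(q : ℂ)⁻¹^4 + (-1/8 : ℂ)*(z : ℂ)^3*(q : ℂ)⁻¹^6 + (-1/8 : ℂ)*(z : ℂ)^3*(q : ℂ)*(q : ℂ)⁻¹ + (1/8 : ℂ)*(z : ℂ)^3*(q : ℂ)*(q : ℂ)⁻¹^3)) * h2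
end

section
/- Let ζ ∈ ℂ, let I be a finite index set, d : I → ℤ, let D be the diagonal matrix with D_{ii} = -d(i)(d(i) + ζ), and let M be any I × I matrix with M_{ij} = 0 whenever |d(i) - d(j)| > 1. Then [D, D^2 M - 2 D M D + M D^2 + 2(DM + MD) - (ζ^2 - 1) M] = 0. -/
theorem stmt_8 {I : Type*} [Fintype I] [DecidableEq I]
    (ζ : ℂ) (d : I → ℤ) (M : Matrix I I ℂ)
    (hM : ∀ i j, 1 < |d i - d j| → M i j = 0) :
    let D : Matrix I I ℂ := Matrix.diagonal fun i => -(d i : ℂ) * ((d i : ℂ) + ζ)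
    let X : Matrix I I ℂ :=
      D ^ 2 * M - (2 : ℂ) • (D * M * D) + M * D ^ 2
        + (2 : ℂ) • (D * M + M * D) - (ζ^2 - 1) • M
    D * X - X * D = 0 := by
  intro D X
  set f : I → ℂ := fun i => -(d i : ℂ) * ((d i : ℂ) + ζ) with hf
  have hD2 : D ^ 2 = Matrix.diagonal (fun i => f i * f i) := by
    simp [D, sq, Matrix.diagonal_mul_diagonal, hf]
  have hX : ∀ i j, X i j =
      (f i * f i - 2 * (f i * f j) + f j * f j + 2 * (f i + f j) - (ζ ^ 2 - 1)) * M i j := by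
    intro i j
    simp only [X, D, hD2, Matrix.sub_apply, Matrix.add_apply, Matrix.smul_apply,
      Matrix.diagonal_mul, Matrix.mul_diagonal, smul_eq_mul]
    ring
  ext i j
  have key : (f i - f j) * X i j = 0 := by
    rw [hX]
    by_cases h : 1 < |d i - d j|
    · rw [hM i j h]; ring
    · simp only [not_lt, abs_le] at h
      have h' : d i - d j = -1 ∨ d i - d j = 0 ∨ d i - d j = 1 := by omega
      rcases h' with h' | h' | h' <;>
      · have hij : (d i : ℂ) = (d j : ℂ) + (d i - d j : ℤ) := by push_cast; ring
        rw [h'] at hij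
        simp only [hf, hij]
        push_cast
        ring
  simp only [Matrix.sub_apply, Matrix.zero_apply, D,
    Matrix.diagonal_mul, Matrix.mul_diagonal]
  have : f i * X i j - X i j * f j = 0 := by linear_combination key
  simpa [hf] using this
end

section
/- Let N ∈ ℕ, α_1, ..., α_N ∈ ℂ* with partial sums A_j = α_1 + ... + α_j satisfying 1 - A_k ≠ 0 for all 0 ≤ k ≤ N. Define G(α)_j = α_{N+1-j}(1 - A_N)/((1 - A_{N+1-j})(1 - A_{N-j})). Then G is an involution: applying G twice returns the original parameters, G(G(α))_j = α_j for all j. -/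
/-!
Writing `A` for the partial sums of `α` and `G` for the transformation, the partial sums of `G α`
telescope: `1 - ∑_{i ≤ m} G(α)_i = (1 - A_N) / (1 - A_{N-m})`, because each new term
`α_{N-m} (1 - A_N) / ((1 - A_{N-m}) (1 - A_{N-m-1}))` is exactly the difference of two consecutive
right-hand sides. Substituting these closed forms into `G (G α)` makes every factor cancel.
-/

namespace Krawtchouk

variable {K : Type*} [Field K]

def partialSum (β : ℕ → K) (m : ℕ) : K := ∑ i ∈ Finset.Icc 1 m, β i

/-- The parameter map `G` of the duality `𝔟₁`. -/
def dualParam (N : ℕ) (β : ℕ → K) (j : ℕ) : K :=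
  β (N + 1 - j) * (1 - partialSum β N) /
    ((1 - partialSum β (N + 1 - j)) * (1 - partialSum β (N - j)))

@[simp]
lemma partialSum_zero (β : ℕ → K) : partialSum β 0 = 0 := by
  simp [partialSum]

lemma partialSum_succ (β : ℕ → K) (k : ℕ) :
    partialSum β (k + 1) = partialSum β k + β (k + 1) :=
  Finset.sum_Icc_succ_top (Nat.le_add_left 1 k) β

lemma one_sub_partialSum_dualParam {N : ℕ} {β : ℕ → K}
    (hA : ∀ k ≤ N, 1 - partialSum β k ≠ 0) {m : ℕ} (hm : m ≤ N) :
    1 - partialSum (dualParam N β) m = (1 - partialSum β N) / (1 - partialSum β (N - m)) := by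
  induction m with
  | zero => simp [div_self (hA N le_rfl)]
  | succ m ih =>
    obtain ⟨k, hk⟩ : ∃ k, N - m = k + 1 := ⟨N - m - 1, by omega⟩
    have hAk : 1 - partialSum β k ≠ 0 := hA k (by omega)
    have hAk1 : 1 - partialSum β k - β (k + 1) ≠ 0 := by
      simpa [partialSum_succ, sub_add_eq_sub_sub] using hA (k + 1) (by omega)
    rw [partialSum_succ, sub_add_eq_sub_sub, ih (by omega), dualParam,
      show N + 1 - (m + 1) = N - m by omega, show N - (m + 1) = k by omega, hk, partialSum_succ,
      sub_add_eq_sub_sub]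
    field_simp

theorem dualParam_dualParam {N : ℕ} {β : ℕ → K}
    (hA : ∀ k ≤ N, 1 - partialSum β k ≠ 0) {j : ℕ} (hj₁ : 1 ≤ j) (hjN : j ≤ N) :
    dualParam N (dualParam N β) j = β j := by
  have hAN : 1 - partialSum β N ≠ 0 := hA N le_rfl
  have hAj : 1 - partialSum β j ≠ 0 := hA j hjN
  have hAj' : 1 - partialSum β (j - 1) ≠ 0 := hA (j - 1) (by omega)
  rw [dualParam, one_sub_partialSum_dualParam hA le_rfl,
    one_sub_partialSum_dualParam hA (by omega : N + 1 - j ≤ N),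
    one_sub_partialSum_dualParam hA (by omega : N - j ≤ N), dualParam,
    show N + 1 - (N + 1 - j) = j by omega, show N - (N + 1 - j) = j - 1 by omega,
    show N - (N - j) = j by omega, Nat.sub_self, partialSum_zero, sub_zero]
  field_simp

end Krawtchouk

theorem stmt_13_general (N : ℕ) (α : ℕ → ℂ)
    (hA : ∀ k ≤ N, 1 - (∑ i ∈ Finset.Icc 1 k, α i) ≠ 0) :
    let G : (ℕ → ℂ) → ℕ → ℂ := fun β j =>
      let Aβ : ℕ → ℂ := fun m => ∑ i ∈ Finset.Icc 1 m, β i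
      β (N + 1 - j) * (1 - Aβ N) / ((1 - Aβ (N + 1 - j)) * (1 - Aβ (N - j)))
    ∀ j, 1 ≤ j → j ≤ N → G (G α) j = α j :=
  fun _ hj₁ hjN => Krawtchouk.dualParam_dualParam hA hj₁ hjN

theorem stmt_13 (N : ℕ) (α : ℕ → ℂ)
    (hα : ∀ j, 1 ≤ j → j ≤ N → α j ≠ 0)
    (hA : ∀ k ≤ N, 1 - (∑ i ∈ Finset.Icc 1 k, α i) ≠ 0) :
    let G : (ℕ → ℂ) → ℕ → ℂ := fun β j =>
      let Aβ : ℕ → ℂ := fun m => ∑ i ∈ Finset.Icc 1 m, β i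
      β (N + 1 - j) * (1 - Aβ N) / ((1 - Aβ (N + 1 - j)) * (1 - Aβ (N - j)))
    ∀ j, 1 ≤ j → j ≤ N → G (G α) j = α j :=
  stmt_13_general N α hA
end

section
/- Let R be an associative unital ℂ-algebra and let Ã, Ã* ∈ R satisfy the tridiagonal relations [Ã, Ã²Ã* − βÃÃ*Ã + Ã*Ã² − γ(ÃÃ* + Ã*Ã) − ρ̃Ã*] = 0 and [Ã*, Ã*²Ã − βÃ*ÃÃ* + ÃÃ*² − γ*(Ã*Ã + ÃÃ*) − ρ̃*Ã] = 0, with β ≠ 2. Let s, s* ∈ ℂ* and set A = s(Ã + γ(β−2)^{-1}·1), A* = s*(Ã* + γ*(β−2)^{-1}·1). Then A, A* satisfy the tridiagonal relations with parameters γ' = 0, γ'* = 0, ρ' = s²(ρ̃ + γ²/(2−β)), ρ'* = s*²(ρ̃* + γ*²/(2−β)); that is, [A, A²A* − βAA*A + A*A² − ρ'A*] = 0 and [A*, A*²A − βA*AA* + AA*² − ρ'*A] = 0. -/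
set_option maxHeartbeats 4000000

lemma aux2_stmt17 {R : Type*} [Ring R] [Algebra ℂ R]
    (At As : R) (β c d ρt s ss : ℂ)
    (h1 : At * (At ^ 2 * As - β • (At * As * At) + As * At ^ 2
            - (c * (β - 2)) • (At * As + As * At) - ρt • As)
        - (At ^ 2 * As - β • (At * As * At) + As * At ^ 2
            - (c * (β - 2)) • (At * As + As * At) - ρt • As) * At = 0) :
    (s • (At + c • (1 : R))) *
      ((s • (At + c • (1 : R))) ^ 2 * (ss • (As + d • (1 : R)))
        - β • ((s • (At + c • (1 : R))) * (ss • (As + d • (1 : R))) * (s • (At + c • (1 : R))))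
        + (ss • (As + d • (1 : R))) * (s • (At + c • (1 : R))) ^ 2
        - (s ^ 2 * (ρt - c ^ 2 * (β - 2))) • (ss • (As + d • (1 : R))))
    - ((s • (At + c • (1 : R))) ^ 2 * (ss • (As + d • (1 : R)))
        - β • ((s • (At + c • (1 : R))) * (ss • (As + d • (1 : R))) * (s • (At + c • (1 : R))))
        + (ss • (As + d • (1 : R))) * (s • (At + c • (1 : R))) ^ 2
        - (s ^ 2 * (ρt - c ^ 2 * (β - 2))) • (ss • (As + d • (1 : R)))) *
      (s • (At + c • (1 : R))) = 0 := by
  have key : (s • (At + c • (1 : R))) *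
      ((s • (At + c • (1 : R))) ^ 2 * (ss • (As + d • (1 : R)))
        - β • ((s • (At + c • (1 : R))) * (ss • (As + d • (1 : R))) * (s • (At + c • (1 : R))))
        + (ss • (As + d • (1 : R))) * (s • (At + c • (1 : R))) ^ 2
        - (s ^ 2 * (ρt - c ^ 2 * (β - 2))) • (ss • (As + d • (1 : R))))
    - ((s • (At + c • (1 : R))) ^ 2 * (ss • (As + d • (1 : R)))
        - β • ((s • (At + c • (1 : R))) * (ss • (As + d • (1 : R))) * (s • (At + c • (1 : R))))
        + (ss • (As + d • (1 : R))) * (s • (At + c • (1 : R))) ^ 2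
        - (s ^ 2 * (ρt - c ^ 2 * (β - 2))) • (ss • (As + d • (1 : R)))) *
      (s • (At + c • (1 : R)))
      = (s ^ 3 * ss) • (At * (At ^ 2 * As - β • (At * As * At) + As * At ^ 2
            - (c * (β - 2)) • (At * As + As * At) - ρt • As)
        - (At ^ 2 * As - β • (At * As * At) + As * At ^ 2
            - (c * (β - 2)) • (At * As + As * At) - ρt • As) * At) := by
    simp only [pow_two, mul_add, add_mul, mul_sub, sub_mul,
      smul_add, smul_sub, smul_smul, smul_mul_assoc, mul_smul_comm,
      mul_one, one_mul, mul_assoc]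
    match_scalars <;> ring
  rw [key, h1, smul_zero]

theorem stmt_17 {R : Type*} [Ring R] [Algebra ℂ R]
    (At As : R) (β γ γs ρt ρts s ss : ℂ) (hβ : β ≠ 2)
    (hs : s ≠ 0) (hss : ss ≠ 0)
    (h1 : At * (At ^ 2 * As - β • (At * As * At) + As * At ^ 2
            - γ • (At * As + As * At) - ρt • As)
        - (At ^ 2 * As - β • (At * As * At) + As * At ^ 2
            - γ • (At * As + As * At) - ρt • As) * At = 0)
    (h2 : As * (As ^ 2 * At - β • (As * At * As) + At * As ^ 2
            - γs • (As * At + At * As) - ρts • At)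
        - (As ^ 2 * At - β • (As * At * As) + At * As ^ 2
            - γs • (As * At + At * As) - ρts • At) * As = 0) :
    let A : R := s • (At + (γ * (β - 2)⁻¹) • (1 : R))
    let B : R := ss • (As + (γs * (β - 2)⁻¹) • (1 : R))
    let ρ' : ℂ := s ^ 2 * (ρt + γ ^ 2 / (2 - β))
    let ρ's : ℂ := ss ^ 2 * (ρts + γs ^ 2 / (2 - β))
    (A * (A ^ 2 * B - β • (A * B * A) + B * A ^ 2 - ρ' • B)
      - (A ^ 2 * B - β • (A * B * A) + B * A ^ 2 - ρ' • B) * A = 0) ∧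
    (B * (B ^ 2 * A - β • (B * A * B) + A * B ^ 2 - ρ's • A)
      - (B ^ 2 * A - β • (B * A * B) + A * B ^ 2 - ρ's • A) * B = 0) := by
  intro A B ρ' ρ's
  have hβ2 : β - 2 ≠ 0 := sub_ne_zero.mpr hβ
  have h2β : (2 : ℂ) - β ≠ 0 := sub_ne_zero.mpr (Ne.symm hβ)
  have e1 : γ * (β - 2)⁻¹ * (β - 2) = γ := by field_simp
  have e1' : γs * (β - 2)⁻¹ * (β - 2) = γs := by field_simp
  have e2 : s ^ 2 * (ρt + γ ^ 2 / (2 - β))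
      = s ^ 2 * (ρt - (γ * (β - 2)⁻¹) ^ 2 * (β - 2)) := by
    field_simp
    ring
  have e2' : ss ^ 2 * (ρts + γs ^ 2 / (2 - β))
      = ss ^ 2 * (ρts - (γs * (β - 2)⁻¹) ^ 2 * (β - 2)) := by
    field_simp
    ring
  constructor
  · show (s • (At + (γ * (β - 2)⁻¹) • (1 : R))) *
      ((s • (At + (γ * (β - 2)⁻¹) • (1 : R))) ^ 2 * (ss • (As + (γs * (β - 2)⁻¹) • (1 : R)))
        - β • ((s • (At + (γ * (β - 2)⁻¹) • (1 : R))) * (ss • (As + (γs * (β - 2)⁻¹) • (1 : R))) * (s • (At + (γ * (β - 2)⁻¹) • (1 : R))))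
        + (ss • (As + (γs * (β - 2)⁻¹) • (1 : R))) * (s • (At + (γ * (β - 2)⁻¹) • (1 : R))) ^ 2
        - (s ^ 2 * (ρt + γ ^ 2 / (2 - β))) • (ss • (As + (γs * (β - 2)⁻¹) • (1 : R))))
    - ((s • (At + (γ * (β - 2)⁻¹) • (1 : R))) ^ 2 * (ss • (As + (γs * (β - 2)⁻¹) • (1 : R)))
        - β • ((s • (At + (γ * (β - 2)⁻¹) • (1 : R))) * (ss • (As + (γs * (β - 2)⁻¹) • (1 : R))) * (s • (At + (γ * (β - 2)⁻¹) • (1 : R))))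
        + (ss • (As + (γs * (β - 2)⁻¹) • (1 : R))) * (s • (At + (γ * (β - 2)⁻¹) • (1 : R))) ^ 2
        - (s ^ 2 * (ρt + γ ^ 2 / (2 - β))) • (ss • (As + (γs * (β - 2)⁻¹) • (1 : R)))) *
      (s • (At + (γ * (β - 2)⁻¹) • (1 : R))) = 0
    rw [e2]
    exact aux2_stmt17 At As β (γ * (β - 2)⁻¹) (γs * (β - 2)⁻¹) ρt s ss (by rw [e1]; exact h1)
  · show (ss • (As + (γs * (β - 2)⁻¹) • (1 : R))) *
      ((ss • (As + (γs * (β - 2)⁻¹) • (1 : R))) ^ 2 * (s • (At + (γ * (β - 2)⁻¹) • (1 : R)))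
        - β • ((ss • (As + (γs * (β - 2)⁻¹) • (1 : R))) * (s • (At + (γ * (β - 2)⁻¹) • (1 : R))) * (ss • (As + (γs * (β - 2)⁻¹) • (1 : R))))
        + (s • (At + (γ * (β - 2)⁻¹) • (1 : R))) * (ss • (As + (γs * (β - 2)⁻¹) • (1 : R))) ^ 2
        - (ss ^ 2 * (ρts + γs ^ 2 / (2 - β))) • (s • (At + (γ * (β - 2)⁻¹) • (1 : R))))
    - ((ss • (As + (γs * (β - 2)⁻¹) • (1 : R))) ^ 2 * (s • (At + (γ * (β - 2)⁻¹) • (1 : R)))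
        - β • ((ss • (As + (γs * (β - 2)⁻¹) • (1 : R))) * (s • (At + (γ * (β - 2)⁻¹) • (1 : R))) * (ss • (As + (γs * (β - 2)⁻¹) • (1 : R))))
        + (s • (At + (γ * (β - 2)⁻¹) • (1 : R))) * (ss • (As + (γs * (β - 2)⁻¹) • (1 : R))) ^ 2
        - (ss ^ 2 * (ρts + γs ^ 2 / (2 - β))) • (s • (At + (γ * (β - 2)⁻¹) • (1 : R)))) *
      (ss • (As + (γs * (β - 2)⁻¹) • (1 : R))) = 0
    rw [e2']
    exact aux2_stmt17 As At β (γs * (β - 2)⁻¹) (γ * (β - 2)⁻¹) ρts ss s (by rw [e1']; exact h2)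
end
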